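/- Let t₁ = t[i₁..j₁] and t₂ = t[i₂..j₂] be distinct cubic runs of a string t, with minimal periods p₁ and p₂ respectively. Then t₁ and t₂ cannot overlap in p₁ + p₂ or more positions; that is, min(j₁,j₂) − max(i₁,i₂) + 1 < p₁ + p₂. -/
import Mathlib


/-- `p` is a period of the substring `t[i..j]` of the 1-indexed string `t`:
`1 ≤ p ≤ |t[i..j]| = j - i + 1`, and `t[k] = t[k + p]` whenever both positions
lie in `[i..j]` (vacuously, the length is always a period). -/
def IsPeriodOf {α : Type*} (t : ℕ → α) (i j p : ℕ) : Prop :=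
  1 ≤ p ∧ p ≤ j + 1 - i ∧ ∀ k, i ≤ k → k + p ≤ j → t (k + p) = t k

/-- The minimal period of the substring `t[i..j]`. -/
noncomputable def minPeriod {α : Type*} (t : ℕ → α) (i j : ℕ) : ℕ :=
  sInf {p | IsPeriodOf t i j p}

/-- `t[i..j]` is a run of the string `t[1..n]`: its exponent is at least `2`
(i.e. `j - i + 1 ≥ 2 · minPeriod`), and the extensions `t[i-1..j]` (if `i > 1`)
and `t[i..j+1]` (if `j < n`) have strictly larger minimal periods. -/
def IsRun {α : Type*} (t : ℕ → α) (n i j : ℕ) : Prop :=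
  1 ≤ i ∧ i ≤ j ∧ j ≤ n ∧
  2 * minPeriod t i j ≤ j + 1 - i ∧
  (1 < i → minPeriod t i j < minPeriod t (i - 1) j) ∧
  (j < n → minPeriod t i j < minPeriod t i (j + 1))

/-- A cubic run is a run of exponent at least `3`. -/
def IsCubicRun {α : Type*} (t : ℕ → α) (n i j : ℕ) : Prop :=
  IsRun t n i j ∧ 3 * minPeriod t i j ≤ j + 1 - i


/-- The core periodicity condition (without the bound `p ≤ length`). -/
def CoreP {α : Type*} (t : ℕ → α) (i j p : ℕ) : Prop :=
  ∀ k, i ≤ k → k + p ≤ j → t (k + p) = t k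

lemma coreP_mono {α : Type*} {t : ℕ → α} {i j i' j' p : ℕ} (h : CoreP t i j p)
    (hi : i ≤ i') (hj : j' ≤ j) : CoreP t i' j' p :=
  fun k hk hkp => h k (le_trans hi hk) (le_trans hkp hj)

lemma coreP_iter {α : Type*} {t : ℕ → α} {i j p : ℕ} (h : CoreP t i j p) :
    ∀ m k, i ≤ k → k + m * p ≤ j → t (k + m * p) = t k := by
  intro m
  induction m with
  | zero => simp
  | succ m ih =>
    intro k hk hkp
    have h1 : k + (m + 1) * p = (k + m * p) + p := by ring
    have h2 : k + m * p ≤ j := by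
      have := Nat.le_add_right (k + m * p) p
      omega
    rw [h1, h (k + m * p) (le_trans hk (Nat.le_add_right _ _)) (by omega)]
    exact ih k hk h2

lemma exists_shift_up {p : ℕ} (hp : 1 ≤ p) (c : ℕ) :
    ∀ d k, c ≤ k + d → k < c + p → ∃ m r, r = k + m * p ∧ c ≤ r ∧ r < c + p := by
  intro d
  induction d with
  | zero =>
    intro k h1 h2
    exact ⟨0, k, by ring, h1, h2⟩
  | succ d ih =>
    intro k h1 h2
    by_cases h : c ≤ k
    · exact ⟨0, k, by ring, h, h2⟩
    · by_cases h3 : c ≤ k + p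
      · exact ⟨1, k + p, by ring, h3, by omega⟩
      · obtain ⟨m, r, hm1, hm2, hm3⟩ := ih (k + p) (by omega) (by omega)
        refine ⟨m + 1, r, ?_, hm2, hm3⟩
        rw [hm1]; ring

lemma exists_shift_down {p : ℕ} (hp : 1 ≤ p) (c : ℕ) :
    ∀ d k, k ≤ c + d → c ≤ k → ∃ m r, k = r + m * p ∧ c ≤ r ∧ r < c + p := by
  intro d
  induction d with
  | zero =>
    intro k h1 h2
    exact ⟨0, k, by ring, h2, by omega⟩
  | succ d ih =>
    intro k h1 h2
    by_cases h : k < c + p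
    · exact ⟨0, k, by ring, h2, h⟩
    · obtain ⟨m, r, hm1, hm2, hm3⟩ := ih (k - p) (by omega) (by omega)
      refine ⟨m + 1, r, ?_, hm2, hm3⟩
      have : k - p = r + m * p := hm1
      have hpk : p ≤ k := by omega
      have : k = r + m * p + p := by omega
      rw [this]; ring

/-- If `t[a..b]` has period `p` and some subinterval `t[c..e]` of it of length
at least `p + g` has period `g`, then `t[a..b]` has period `g`. -/
lemma coreP_ext {α : Type*} {t : ℕ → α} {a b c e p g : ℕ}
    (hp : 1 ≤ p) (hg : 1 ≤ g) (hab : CoreP t a b p) (hce : CoreP t c e g)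
    (hac : a ≤ c) (heb : e ≤ b) (hlen : p + g ≤ e + 1 - c) :
    CoreP t a b g := by
  have hce' : c + p + g ≤ e + 1 := by omega
  intro k hk hkb
  by_cases h1 : c ≤ k ∧ k + g ≤ e
  · exact hce k h1.1 h1.2
  · by_cases h2 : k < c
    · -- shift up into [c, c+p)
      obtain ⟨m, r, hr, hrc, hrp⟩ := exists_shift_up hp c c (k := k) (by omega) (by omega)
      have hre : r + g ≤ e := by omega
      have e1 : t (r + g) = t (k + g) := by
        have : r + g = (k + g) + m * p := by omega
        rw [this]
        exact coreP_iter hab m (k + g) (by omega) (by omega)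
      have e2 : t r = t k := by
        rw [hr]
        exact coreP_iter hab m k hk (by omega)
      have e3 : t (r + g) = t r := hce r hrc hre
      rw [← e1, e3, e2]
    · -- c ≤ k, and k + g > e : shift down into [e+1-g-p, e+1-g)
      have hck : c ≤ k := by omega
      have hke : e < k + g := by omega
      obtain ⟨m, r, hr, hrc, hrp⟩ :=
        exists_shift_down hp (e + 1 - g - p) (k := k) k (by omega) (by omega)
      have hrc' : c ≤ r := by omega
      have hre : r + g ≤ e := by omega
      have e1 : t (k + g) = t (r + g) := by
        have : k + g = (r + g) + m * p := by omega
        rw [this]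
        exact coreP_iter hab m (r + g) (by omega) (by omega)
      have e2 : t k = t r := by
        rw [hr]
        exact coreP_iter hab m r (by omega) (by omega)
      have e3 : t (r + g) = t r := hce r hrc' hre
      rw [e1, e3, e2]

/-- Weak Fine–Wilf: an interval of length at least `p + q` with periods `p`
and `q` has period `gcd p q`. -/
lemma coreP_gcd {α : Type*} {t : ℕ → α} :
    ∀ s : ℕ, ∀ {i j p q : ℕ}, p + q ≤ s → 1 ≤ p → 1 ≤ q →
      CoreP t i j p → CoreP t i j q → p + q ≤ j + 1 - i →
      CoreP t i j (Nat.gcd p q) := by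
  intro s
  induction s with
  | zero => intro i j p q hs hp hq _ _ _; omega
  | succ s ih =>
    intro i j p q hs hp hq hcp hcq hlen
    rcases le_total p q with hpq | hpq
    · rcases eq_or_lt_of_le hpq with heq | hlt
      · subst heq
        rw [Nat.gcd_self]
        exact hcp
      · set q' := q - p with hq'
        have hq'1 : 1 ≤ q' := by omega
        have hij : i + p + q ≤ j + 1 := by omega
        have hcp' : CoreP t i (j - p) p := coreP_mono hcp le_rfl (by omega)
        have hcq' : CoreP t i (j - p) q' := by
          intro k hk hk2
          have hjp : p ≤ j := by omega
          have e1 : t (k + q' + p) = t (k + q') := hcp (k + q') (by omega) (by omega)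
          have e2 : t (k + q) = t k := hcq k hk (by omega)
          have e3 : k + q' + p = k + q := by omega
          rw [e3] at e1
          rw [← e1, e2]
        have hgcd : Nat.gcd p q' = Nat.gcd p q := Nat.gcd_sub_self_right hpq
        have hIH : CoreP t i (j - p) (Nat.gcd p q') :=
          ih (by omega) hp hq'1 hcp' hcq' (by omega)
        rw [hgcd] at hIH
        have hg1 : 1 ≤ Nat.gcd p q := Nat.gcd_pos_of_pos_left _ (by omega)
        have hgq' : Nat.gcd p q ≤ q' := by
          rw [← hgcd]; exact Nat.le_of_dvd (by omega) (Nat.gcd_dvd_right _ _)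
        exact coreP_ext hp hg1 hcp hIH le_rfl (by omega) (by omega)
    · rcases eq_or_lt_of_le hpq with heq | hlt
      · subst heq
        rw [Nat.gcd_self]
        exact hcp
      · rw [Nat.gcd_comm]
        set p' := p - q with hp'
        have hp'1 : 1 ≤ p' := by omega
        have hcq2 : CoreP t i (j - q) q := coreP_mono hcq le_rfl (by omega)
        have hcp2 : CoreP t i (j - q) p' := by
          intro k hk hk2
          have hjq : q ≤ j := by omega
          have e1 : t (k + p' + q) = t (k + p') := hcq (k + p') (by omega) (by omega)
          have e2 : t (k + p) = t k := hcp k hk (by omega)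
          have e3 : k + p' + q = k + p := by omega
          rw [e3] at e1
          rw [← e1, e2]
        have hgcd : Nat.gcd q p' = Nat.gcd q p := Nat.gcd_sub_self_right hpq
        have hIH : CoreP t i (j - q) (Nat.gcd q p') :=
          ih (by omega) hq hp'1 hcq2 hcp2 (by omega)
        rw [hgcd] at hIH
        have hg1 : 1 ≤ Nat.gcd q p := Nat.gcd_pos_of_pos_left _ (by omega)
        have hgp' : Nat.gcd q p ≤ p' := by
          rw [← hgcd]; exact Nat.le_of_dvd (by omega) (Nat.gcd_dvd_right _ _)
        exact coreP_ext hq hg1 hcq hIH le_rfl (by omega) (by omega)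

lemma minPeriod_mem {α : Type*} {t : ℕ → α} {i j : ℕ} (h : i ≤ j) :
    IsPeriodOf t i j (minPeriod t i j) := by
  have hne : IsPeriodOf t i j (j + 1 - i) :=
    ⟨by omega, le_rfl, fun k hk hkp => by omega⟩
  exact Nat.sInf_mem (s := {p | IsPeriodOf t i j p}) ⟨j + 1 - i, hne⟩

lemma minPeriod_le {α : Type*} {t : ℕ → α} {i j p : ℕ} (h : IsPeriodOf t i j p) :
    minPeriod t i j ≤ p := Nat.sInf_le h

lemma cubic_runs_overlap_aux {α : Type*} (t : ℕ → α) (n i₁ j₁ i₂ j₂ : ℕ)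
    (h₁ : IsCubicRun t n i₁ j₁) (h₂ : IsCubicRun t n i₂ j₂)
    (hne : (i₁, j₁) ≠ (i₂, j₂)) (hle : i₁ ≤ i₂)
    (hov : i₂ + minPeriod t i₁ j₁ + minPeriod t i₂ j₂ ≤ min j₁ j₂ + 1) : False := by
  obtain ⟨⟨hi₁1, hij₁, hj₁n, hexp₁, hleft₁, hright₁⟩, hcub₁⟩ := h₁
  obtain ⟨⟨hi₂1, hij₂, hj₂n, hexp₂, hleft₂, hright₂⟩, hcub₂⟩ := h₂
  set p₁ := minPeriod t i₁ j₁ with hp₁def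
  set p₂ := minPeriod t i₂ j₂ with hp₂def
  obtain ⟨hp₁1, hp₁le, core₁⟩ := minPeriod_mem (t := t) hij₁
  obtain ⟨hp₂1, hp₂le, core₂⟩ := minPeriod_mem (t := t) hij₂
  set e := min j₁ j₂ with hedef
  have he₁ : e ≤ j₁ := min_le_left _ _
  have he₂ : e ≤ j₂ := min_le_right _ _
  -- the overlap has both periods
  have coreO₁ : CoreP t i₂ e p₁ := coreP_mono core₁ hle he₁
  have coreO₂ : CoreP t i₂ e p₂ := coreP_mono core₂ le_rfl he₂
  set g := Nat.gcd p₁ p₂ with hgdef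
  have hg1 : 1 ≤ g := Nat.gcd_pos_of_pos_left _ (by omega)
  have hgp₁ : g ≤ p₁ := Nat.le_of_dvd (by omega) (Nat.gcd_dvd_left _ _)
  have hgp₂ : g ≤ p₂ := Nat.le_of_dvd (by omega) (Nat.gcd_dvd_right _ _)
  have coreOg : CoreP t i₂ e g :=
    coreP_gcd (p₁ + p₂) le_rfl hp₁1 hp₂1 coreO₁ coreO₂ (by omega)
  -- g is a period of both full runs, hence g = p₁ = p₂
  have core₁g : CoreP t i₁ j₁ g :=
    coreP_ext hp₁1 hg1 core₁ coreOg hle he₁ (by omega)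
  have core₂g : CoreP t i₂ j₂ g :=
    coreP_ext hp₂1 hg1 core₂ coreOg le_rfl he₂ (by omega)
  have hgep₁ : p₁ ≤ g := minPeriod_le ⟨hg1, by omega, core₁g⟩
  have hgep₂ : p₂ ≤ g := minPeriod_le ⟨hg1, by omega, core₂g⟩
  have hpp : p₁ = p₂ := by omega
  -- the union has period p₁
  have coreU : CoreP t i₁ (max j₁ j₂) p₁ := by
    intro k hk hkb
    by_cases h : k + p₁ ≤ j₁
    · exact core₁ k hk h
    · have hk₂ : i₂ ≤ k := by omega
      have hkj₂ : k + p₁ ≤ j₂ := by omega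
      rw [hpp] at hkj₂ ⊢
      exact core₂ k hk₂ hkj₂
  -- contradiction with non-extensibility
  rcases lt_or_eq_of_le hle with hlt | heq
  · -- left extension of the second run
    have h1 : p₂ < minPeriod t (i₂ - 1) j₂ := hleft₂ (by omega)
    have h2 : minPeriod t (i₂ - 1) j₂ ≤ p₂ := by
      refine minPeriod_le ⟨hp₂1, by omega, ?_⟩
      rw [← hpp]
      exact coreP_mono coreU (by omega) (le_max_right _ _)
    omega
  · -- same left end, so different right ends
    have hjj : j₁ ≠ j₂ := by
      intro h
      exact hne (by rw [heq, h])
    rcases lt_or_gt_of_ne hjj with hj | hj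
    · have h1 : p₁ < minPeriod t i₁ (j₁ + 1) := hright₁ (by omega)
      have h2 : minPeriod t i₁ (j₁ + 1) ≤ p₁ := by
        refine minPeriod_le ⟨hp₁1, by omega, ?_⟩
        exact coreP_mono coreU le_rfl (by omega)
      omega
    · have h1 : p₂ < minPeriod t i₂ (j₂ + 1) := hright₂ (by omega)
      have h2 : minPeriod t i₂ (j₂ + 1) ≤ p₂ := by
        refine minPeriod_le ⟨hp₂1, by omega, ?_⟩
        rw [← hpp]
        exact coreP_mono coreU (by omega) (by omega)
      omega

/-- Two distinct cubic runs `t[i₁..j₁]`, `t[i₂..j₂]` with minimal periods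
`p₁`, `p₂` cannot overlap in `p₁ + p₂` or more positions. -/
theorem cubic_runs_overlap {α : Type*} (t : ℕ → α) (n i₁ j₁ i₂ j₂ : ℕ)
    (h₁ : IsCubicRun t n i₁ j₁) (h₂ : IsCubicRun t n i₂ j₂)
    (hne : (i₁, j₁) ≠ (i₂, j₂)) :
    (min j₁ j₂ : ℤ) - max i₁ i₂ + 1
      < (minPeriod t i₁ j₁ : ℤ) + minPeriod t i₂ j₂ := by
  by_contra hcon
  push_neg at hcon
  rcases le_total i₁ i₂ with h | h
  · refine cubic_runs_overlap_aux t n i₁ j₁ i₂ j₂ h₁ h₂ hne h ?_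
    omega
  · refine cubic_runs_overlap_aux t n i₂ j₂ i₁ j₁ h₂ h₁ (Ne.symm hne) h ?_
    omega
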